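/- arXiv:1807.10365 — 2 statements merged into one kernel-verified Lean document; each statement's English description precedes it below -/
import Mathlib

section
/- Let $1<p<N$ and set $p' = p/(p-1)$, $\kappa = (N-p)/(p-1)$. Then the radial function $U_1(x) = \left(\frac{\kappa^{1/p'} N^{1/p}}{1+|x|^{p'}}\right)^{\kappa/p'}$ on $\mathbb{R}^N$ satisfies $-\Delta_p U_1 = U_1^{p^*-1}$ in $\mathbb{R}^N \setminus \{0\}$, where $\Delta_p u = \mathrm{div}(|\nabla u|^{p-2}\nabla u)$ and $p^* = pN/(N-p)$. -/
/-!
Write `X = 1 + r^{p'}`. The profile `f = (A/X)^{κ/p'}` has `f' < 0`, and since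
`(p' - 1)(p - 1) = 1` its `p`-flux is `|f'|^{p-2} f' = -B r X^{-m}` with `m = N(p-1)/p`,
`B = (κ A^{κ/p'})^{p-1}`. Because `m p' = N`, the radial divergence of `r X^{-m}` collapses to
`N X^{-(m+1)}`. Finally `(κ/p')(p^* - 1) = m + 1` and the choice of `A` makes `A^{m+1} = B N`,
which is exactly `f^{p^*-1}`.
-/

open Real Filter Topology

/-- The divergence at `|x| = r` of the vector field `g(|x|) x/|x|` on `ℝ^N`. -/
noncomputable def radialDiv (N : ℝ) (g : ℝ → ℝ) (r : ℝ) : ℝ :=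
  deriv g r + (N - 1) / r * g r

noncomputable def talentiProfile (A a q s : ℝ) : ℝ :=
  (A / (1 + s ^ q)) ^ a

theorem radialDiv_congr {N r : ℝ} {g h : ℝ → ℝ} (hgh : g =ᶠ[𝓝 r] h) :
    radialDiv N g r = radialDiv N h r := by
  rw [radialDiv, radialDiv, hgh.deriv_eq, hgh.eq_of_nhds]

theorem radialDiv_const_mul (N c r : ℝ) (g : ℝ → ℝ) :
    radialDiv N (fun s => c * g s) r = c * radialDiv N g r := by
  simp only [radialDiv, deriv_const_mul_field']
  ring

theorem radialDiv_mul_one_add_rpow_neg {N q m r : ℝ} (hr : 0 < r) (hmq : m * q = N) :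
    radialDiv N (fun s => s * (1 + s ^ q) ^ (-m)) r = N * (1 + r ^ q) ^ (-(m + 1)) := by
  have hX : 0 < 1 + r ^ q := by positivity
  have hderiv : HasDerivAt (fun s => s * (1 + s ^ q) ^ (-m))
      (1 * (1 + r ^ q) ^ (-m) + r * (q * r ^ (q - 1) * -m * (1 + r ^ q) ^ (-m - 1))) r :=
    (hasDerivAt_id r).mul
      (((hasDerivAt_rpow_const (Or.inl hr.ne')).const_add 1).rpow_const (Or.inl hX.ne'))
  have hr_pow : r * r ^ (q - 1) = r ^ q := by
    rw [mul_comm, ← rpow_add_one hr.ne']; ring_nf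
  have hX_pow : (1 + r ^ q) ^ (-m) = (1 + r ^ q) ^ (-(m + 1)) * (1 + r ^ q) := by
    rw [← rpow_add_one hX.ne']; ring_nf
  rw [radialDiv, hderiv.deriv, hX_pow, show -m - 1 = -(m + 1) by ring]
  field_simp
  linear_combination -r ^ q * hmq - m * q * hr_pow

theorem hasDerivAt_talentiProfile {A a q s : ℝ} (hA : 0 < A) (hs : 0 < s) :
    HasDerivAt (talentiProfile A a q)
      (-(a * q * A ^ a * s ^ (q - 1) * (1 + s ^ q) ^ (-a - 1))) s := by
  have hX : 0 < 1 + s ^ q := by positivity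
  have h := ((hasDerivAt_const s A).div
    ((hasDerivAt_rpow_const (Or.inl hs.ne')).const_add 1) hX.ne').rpow_const (p := a)
    (Or.inl (div_pos hA hX).ne')
  refine h.congr_deriv ?_
  simp only [Pi.div_apply]
  rw [div_rpow hA.le hX.le, rpow_sub hA, rpow_sub hX, rpow_sub hX, rpow_one, rpow_one,
    rpow_neg hX.le]
  field_simp
  ring

theorem abs_rpow_sub_two_mul_of_neg {x : ℝ} (hx : x < 0) (p : ℝ) :
    |x| ^ (p - 2) * x = -(-x) ^ (p - 1) := by
  rw [abs_of_neg hx, show p - 1 = p - 2 + 1 by ring, rpow_add_one (neg_ne_zero.2 hx.ne)]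
  ring

theorem talentiProfile_flux {A a q s : ℝ} (hA : 0 < A) (ha : 0 < a) (hq : 0 < q) (hs : 0 < s)
    (p : ℝ) :
    |deriv (talentiProfile A a q) s| ^ (p - 2) * deriv (talentiProfile A a q) s =
      -((a * q * A ^ a) ^ (p - 1) * s ^ ((q - 1) * (p - 1)) *
        (1 + s ^ q) ^ ((-a - 1) * (p - 1))) := by
  have hX : 0 < 1 + s ^ q := by positivity
  rw [(hasDerivAt_talentiProfile hA hs).deriv,
    abs_rpow_sub_two_mul_of_neg (neg_neg_of_pos (by positivity)), neg_neg,
    mul_rpow (by positivity) (by positivity), mul_rpow (by positivity) (by positivity),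
    rpow_mul hs.le, rpow_mul hX.le]

theorem neg_radialDiv_flux_talentiProfile {N p A a q r : ℝ} (hA : 0 < A) (ha : 0 < a)
    (hq : 0 < q) (hr : 0 < r) (hpq : (q - 1) * (p - 1) = 1) (hN : (a + 1) * (p - 1) * q = N) :
    -radialDiv N (fun s => |deriv (talentiProfile A a q) s| ^ (p - 2) *
        deriv (talentiProfile A a q) s) r =
      (a * q * A ^ a) ^ (p - 1) * N * (1 + r ^ q) ^ (-((a + 1) * (p - 1) + 1)) := by
  have hflux : (fun s => |deriv (talentiProfile A a q) s| ^ (p - 2) *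
        deriv (talentiProfile A a q) s) =ᶠ[𝓝 r]
      fun s => -(a * q * A ^ a) ^ (p - 1) * (s * (1 + s ^ q) ^ (-((a + 1) * (p - 1)))) := by
    filter_upwards [Ioi_mem_nhds hr] with s hs
    rw [talentiProfile_flux hA ha hq hs, hpq, rpow_one,
      show (-a - 1) * (p - 1) = -((a + 1) * (p - 1)) by ring]
    ring
  rw [radialDiv_congr hflux, radialDiv_const_mul, radialDiv_mul_one_add_rpow_neg hr hN]
  ring

theorem talentiProfile_rpow {A a q s : ℝ} (hA : 0 < A) (hs : 0 ≤ s) (b : ℝ) :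
    talentiProfile A a q s ^ b = A ^ (a * b) * (1 + s ^ q) ^ (-(a * b)) := by
  have hX : 0 < 1 + s ^ q := by positivity
  rw [talentiProfile, ← rpow_mul (div_pos hA hX).le, div_rpow hA.le hX.le, rpow_neg hX.le,
    div_eq_mul_inv]

theorem mul_rpow_sub_one_mul_of_rpow_eq {A κ N a p : ℝ} (hA : 0 < A) (hκ : 0 ≤ κ)
    (hAp : A ^ p = κ ^ (p - 1) * N) :
    (κ * A ^ a) ^ (p - 1) * N = A ^ ((a + 1) * (p - 1) + 1) := by
  rw [show (a + 1) * (p - 1) + 1 = a * (p - 1) + p by ring, rpow_add hA, rpow_mul hA.le, hAp,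
    mul_rpow hκ (by positivity)]
  ring

/-- The radial Aubin–Talenti function `U₁(x) = (κ^(1/p') N^(1/p) / (1+|x|^{p'}))^{κ/p'}`
satisfies `-Δ_p U₁ = U₁^{p^*-1}` away from the origin, expressed in the radial form of the
`p`-Laplacian: for `u(x) = f(|x|)`, `Δ_p u = (|f'|^{p-2}f')' + (N-1)/r · |f'|^{p-2}f'`. -/
theorem stmt0 (N : ℕ) (p p' κ pstar : ℝ) (hp1 : 1 < p) (hpN : p < N)
    (hp' : p' = p / (p - 1)) (hκ : κ = ((N : ℝ) - p) / (p - 1))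
    (hps : pstar = p * N / ((N : ℝ) - p))
    (f : ℝ → ℝ)
    (hf : ∀ r : ℝ, f r = (κ ^ (1 / p') * (N : ℝ) ^ (1 / p) / (1 + r ^ p')) ^ (κ / p')) :
    ∀ r : ℝ, 0 < r →
      -((deriv (fun s => |deriv f s| ^ (p - 2) * deriv f s) r)
          + ((N : ℝ) - 1) / r * (|deriv f r| ^ (p - 2) * deriv f r))
        = (f r) ^ (pstar - 1) := by
  intro r hr
  have hp1' : 0 < p - 1 := sub_pos.2 hp1
  have hp0 : 0 < p := by linarith
  have hNp : 0 < (N : ℝ) - p := sub_pos.2 hpN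
  have hN0 : (0 : ℝ) < N := by linarith
  have hκ0 : 0 < κ := hκ ▸ div_pos hNp hp1'
  have hp'0 : 0 < p' := hp' ▸ div_pos hp0 hp1'
  set A := κ ^ (1 / p') * (N : ℝ) ^ (1 / p)
  have hA : 0 < A := by positivity
  have hAp : A ^ p = κ ^ (p - 1) * N := by
    rw [mul_rpow (by positivity) (by positivity), ← rpow_mul hκ0.le, ← rpow_mul hN0.le,
      one_div_mul_cancel hp0.ne', rpow_one, hp']
    congr 2
    field_simp
  have hpq : (p' - 1) * (p - 1) = 1 := by rw [hp']; field_simp; ring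
  have hNq : (κ / p' + 1) * (p - 1) * p' = N := by rw [hp', hκ]; field_simp; ring
  have hexp : κ / p' * (pstar - 1) = (κ / p' + 1) * (p - 1) + 1 := by
    rw [hp', hκ, hps]; field_simp; ring
  obtain rfl : f = talentiProfile A (κ / p') p' := funext hf
  change -radialDiv N _ r = _
  rw [neg_radialDiv_flux_talentiProfile hA (div_pos hκ0 hp'0) hp'0 hr hpq hNq,
    talentiProfile_rpow hA hr.le, hexp, div_mul_cancel₀ _ hp'0.ne',
    mul_rpow_sub_one_mul_of_rpow_eq hA hκ0.le hAp]
end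

section
/- Let $N \ge 2$, $2 \le p < N$, $\mu > 0$, $\gamma > 0$, and suppose $N - 1 - 2\gamma(p-1) \le 0$ and $\gamma(N - p - \gamma(p-1)) \le 0$. Define $h(r) := r^{-\gamma} e^{-\mu r}$ for $r > 0$. Then for all $r > 0$, the radial $p$-Laplacian of $h$ satisfies $-\left[ (|h'|^{p-2} h')' + \frac{N-1}{r} |h'|^{p-2} h' \right] + \mu^p (p-1) h^{p-1} \le \mu \frac{\gamma^{p-2}(N-1-2\gamma(p-1))}{r^{p-1}} h^{p-1} + \frac{\gamma^{p-1}(N-p-\gamma(p-1))}{r^p} h^{p-1}$. -/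
/-!
Since `h' = -(γ/r + μ) h`, every term of the estimate is `h^{p-1}` times a coefficient built
from `a = γ/r`, `μ` and the powers `a^{p-2}`, `μ^{p-2}`, `(a+μ)^{p-2}`. Multiplied by `γ`, the
coefficient inequality is linear in these three powers, and it follows from
`a^{p-2}, μ^{p-2} ≤ (a+μ)^{p-2}` (as `p ≥ 2`) together with whichever of the two sign
conditions is sharper: the first one when `γ ≤ 1`, the second one when `γ ≥ 1`.
-/

open Real Filter

lemma barrier_polynomial_le {c γ α a μ P Q M : ℝ} (hc : 1 ≤ c) (hγ : 0 ≤ γ)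
    (ha : 0 ≤ a) (hμ : 0 ≤ μ) (hPQ : P ≤ Q) (hMQ : M ≤ Q) (h1 : α ≤ 2 * γ * c)
    (h2 : α ≤ c * (1 + γ)) :
    α * a * ((a + μ) * Q - μ * P - a * P)
      ≤ c * a ^ 2 * (Q - P)
        + γ * c * ((a + μ) ^ 2 * Q - μ ^ 2 * M - a ^ 2 * P - 2 * μ * a * P) := by
  have hc0 : 0 ≤ c := by linarith
  have hX : 0 ≤ (a + μ) * Q - μ * P - a * P := by
    nlinarith [mul_nonneg (by linarith : 0 ≤ a + μ) (sub_nonneg.2 hPQ)]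
  have haX : a * ((a + μ) * Q - μ * P - a * P)
      ≤ (a + μ) ^ 2 * Q - μ ^ 2 * M - a ^ 2 * P - 2 * μ * a * P := by
    nlinarith [mul_nonneg hμ (by nlinarith : 0 ≤ (a + μ) * Q - μ * M - a * P)]
  rcases le_total γ 1 with hγ1 | hγ1
  · nlinarith [mul_nonneg (sub_nonneg.2 h1) (mul_nonneg ha hX),
      mul_nonneg (mul_nonneg (mul_nonneg (sub_nonneg.2 hγ1) hc0) (sq_nonneg a)) (sub_nonneg.2 hPQ),
      mul_nonneg (mul_nonneg (mul_nonneg hγ hc0) (sq_nonneg μ)) (sub_nonneg.2 hMQ)]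
  · nlinarith [mul_nonneg (sub_nonneg.2 h2) (mul_nonneg ha hX),
      mul_nonneg (mul_nonneg (sub_nonneg.2 hγ1) hc0) (sub_nonneg.2 haX),
      mul_nonneg (mul_nonneg hc0 (sq_nonneg μ)) (sub_nonneg.2 hMQ)]

lemma barrier_coeff_le {n p μ γ r : ℝ} (hp : 2 ≤ p) (hμ : 0 < μ) (hγ : 0 < γ) (hr : 0 < r)
    (h1 : n - 1 - 2 * γ * (p - 1) ≤ 0) (h2 : n - p - γ * (p - 1) ≤ 0) :
    -((p - 1) * (γ / r + μ) ^ (p - 2) * (γ / r ^ 2 + (γ / r + μ) ^ 2))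
        + (n - 1) / r * (γ / r + μ) ^ (p - 1) + μ ^ p * (p - 1)
      ≤ μ * (γ ^ (p - 2) * (n - 1 - 2 * γ * (p - 1))) / r ^ (p - 1)
        + γ ^ (p - 1) * (n - p - γ * (p - 1)) / r ^ p := by
  have ha : 0 < γ / r := div_pos hγ hr
  have hb : 0 < γ / r + μ := by positivity
  have key := barrier_polynomial_le (α := n - 1) (by linarith : 1 ≤ p - 1) hγ.le ha.le hμ.le
    (rpow_le_rpow ha.le (by linarith : γ / r ≤ γ / r + μ) (by linarith : 0 ≤ p - 2))
    (rpow_le_rpow hμ.le (by linarith : μ ≤ γ / r + μ) (by linarith : 0 ≤ p - 2))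
    (by linarith) (by linarith)
  have eb : (γ / r + μ) ^ (p - 1) = (γ / r + μ) ^ (p - 2) * (γ / r + μ) := by
    rw [← rpow_add_one hb.ne']; ring_nf
  have eμ : μ ^ p = μ ^ (p - 2) * μ ^ 2 := by
    rw [← rpow_natCast, ← rpow_add hμ]; norm_num
  have eγ2 : γ ^ (p - 2) = (γ / r) ^ (p - 2) * r ^ (p - 2) := by
    rw [← mul_rpow ha.le hr.le, div_mul_cancel₀ _ hr.ne']
  have eγ1 : γ ^ (p - 1) = (γ / r) ^ (p - 2) * r ^ (p - 2) * γ := by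
    rw [← eγ2, ← rpow_add_one hγ.ne']; ring_nf
  have er1 : r ^ (p - 1) = r ^ (p - 2) * r := by
    rw [← rpow_add_one hr.ne']; ring_nf
  have erp : r ^ p = r ^ (p - 2) * r ^ 2 := by
    rw [← rpow_natCast, ← rpow_add hr]; norm_num
  rw [eb, eμ, eγ2, eγ1, er1, erp]
  generalize (γ / r) ^ (p - 2) = P, (γ / r + μ) ^ (p - 2) = Q, μ ^ (p - 2) = M at key ⊢
  rw [← sub_nonneg, ← mul_nonneg_iff_of_pos_right hγ]
  refine (sub_nonneg.2 key).trans_eq ?_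
  field_simp
  ring

noncomputable def barrier (μ γ s : ℝ) : ℝ := s ^ (-γ) * exp (-μ * s)

section Barrier

variable {μ γ : ℝ}

lemma barrier_pos {s : ℝ} (hs : 0 < s) : 0 < barrier μ γ s := by
  unfold barrier; positivity

lemma hasDerivAt_barrier {r : ℝ} (hr : 0 < r) :
    HasDerivAt (barrier μ γ) (-(γ / r + μ) * barrier μ γ r) r := by
  have hpow : HasDerivAt (fun s : ℝ => s ^ (-γ)) (-γ * r ^ (-γ - 1)) r :=
    hasDerivAt_rpow_const (Or.inl hr.ne')
  have hexp : HasDerivAt (fun s : ℝ => exp (-μ * s)) (exp (-μ * r) * -μ) r := by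
    simpa using ((hasDerivAt_id r).const_mul (-μ)).exp
  refine (hpow.mul hexp).congr_deriv ?_
  rw [barrier, rpow_sub_one hr.ne']
  field_simp
  ring

lemma barrier_flux_eq (hμ : 0 < μ) (hγ : 0 < γ) (p : ℝ) {s : ℝ} (hs : 0 < s) :
    |deriv (barrier μ γ) s| ^ (p - 2) * deriv (barrier μ γ) s
      = -((γ / s + μ) * barrier μ γ s) ^ (p - 1) := by
  have hpos : 0 < (γ / s + μ) * barrier μ γ s := mul_pos (by positivity) (barrier_pos hs)
  rw [(hasDerivAt_barrier hs).deriv, neg_mul, abs_neg, abs_of_pos hpos,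
    show p - 1 = p - 2 + 1 by ring, rpow_add_one hpos.ne']
  ring

lemma hasDerivAt_barrier_flux (hμ : 0 < μ) (hγ : 0 < γ) (p : ℝ) {r : ℝ} (hr : 0 < r) :
    HasDerivAt (fun s => -((γ / s + μ) * barrier μ γ s) ^ (p - 1))
      ((p - 1) * (γ / r + μ) ^ (p - 2) * (γ / r ^ 2 + (γ / r + μ) ^ 2)
        * barrier μ γ r ^ (p - 1)) r := by
  have hH := barrier_pos (μ := μ) (γ := γ) hr
  have hb : 0 < γ / r + μ := by positivity
  have hcoef : HasDerivAt (fun s : ℝ => γ / s + μ) (-(γ / r ^ 2)) r := by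
    simpa [div_eq_mul_inv] using ((hasDerivAt_inv hr.ne').const_mul γ).add_const μ
  have hprod : HasDerivAt (fun s => (γ / s + μ) * barrier μ γ s)
      (-(γ / r ^ 2) * barrier μ γ r + (γ / r + μ) * (-(γ / r + μ) * barrier μ γ r)) r :=
    hcoef.mul (hasDerivAt_barrier hr)
  refine ((hprod.rpow_const (p := p - 1) (Or.inl (mul_pos hb hH).ne')).neg).congr_deriv ?_
  rw [show p - 1 - 1 = p - 2 by ring, mul_rpow hb.le hH.le,
    show p - 1 = p - 2 + 1 by ring, rpow_add_one hH.ne']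
  ring

end Barrier

theorem stmt4_general (N : ℕ) (p μ γ : ℝ) (hp2 : 2 ≤ p)
    (hμ : 0 < μ) (hγ : 0 < γ)
    (h1 : (N : ℝ) - 1 - 2 * γ * (p - 1) ≤ 0) (h2 : γ * ((N : ℝ) - p - γ * (p - 1)) ≤ 0)
    (h : ℝ → ℝ) (hh : ∀ r : ℝ, h r = r ^ (-γ) * Real.exp (-μ * r)) :
    ∀ r : ℝ, 0 < r →
      -((deriv (fun s => |deriv h s| ^ (p - 2) * deriv h s) r)
          + ((N : ℝ) - 1) / r * (|deriv h r| ^ (p - 2) * deriv h r))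
        + μ ^ p * (p - 1) * (h r) ^ (p - 1)
      ≤ μ * (γ ^ (p - 2) * ((N : ℝ) - 1 - 2 * γ * (p - 1))) / r ^ (p - 1) * (h r) ^ (p - 1)
        + (γ ^ (p - 1) * ((N : ℝ) - p - γ * (p - 1))) / r ^ p * (h r) ^ (p - 1) := by
  intro r hr
  obtain rfl : h = barrier μ γ := funext hh
  have hflux : (fun s => |deriv (barrier μ γ) s| ^ (p - 2) * deriv (barrier μ γ) s)
      =ᶠ[nhds r] fun s => -((γ / s + μ) * barrier μ γ s) ^ (p - 1) :=
    eventually_of_mem (Ioi_mem_nhds hr) fun s hs => barrier_flux_eq hμ hγ p hs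
  rw [hflux.deriv_eq, (hasDerivAt_barrier_flux hμ hγ p hr).deriv, barrier_flux_eq hμ hγ p hr,
    mul_rpow (by positivity) (barrier_pos hr).le]
  have hcoeff := barrier_coeff_le hp2 hμ hγ hr h1 (nonpos_of_mul_nonpos_right h2 hγ)
  linear_combination mul_le_mul_of_nonneg_right hcoeff (rpow_nonneg (barrier_pos hr).le (p - 1))

/-- Lower barrier estimate (critical case, `p ≥ 2`): for `h(r) = r^{-γ} e^{-μ r}` and under the
sign conditions on the coefficients, the radial `p`-Laplacian of `h` satisfies the stated
inequality uniformly in `μ > 0` and `r > 0`. -/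
theorem stmt4 (N : ℕ) (p μ γ : ℝ) (hN : 2 ≤ N) (hp2 : 2 ≤ p) (hpN : p < N)
    (hμ : 0 < μ) (hγ : 0 < γ)
    (h1 : (N : ℝ) - 1 - 2 * γ * (p - 1) ≤ 0) (h2 : γ * ((N : ℝ) - p - γ * (p - 1)) ≤ 0)
    (h : ℝ → ℝ) (hh : ∀ r : ℝ, h r = r ^ (-γ) * Real.exp (-μ * r)) :
    ∀ r : ℝ, 0 < r →
      -((deriv (fun s => |deriv h s| ^ (p - 2) * deriv h s) r)
          + ((N : ℝ) - 1) / r * (|deriv h r| ^ (p - 2) * deriv h r))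
        + μ ^ p * (p - 1) * (h r) ^ (p - 1)
      ≤ μ * (γ ^ (p - 2) * ((N : ℝ) - 1 - 2 * γ * (p - 1))) / r ^ (p - 1) * (h r) ^ (p - 1)
        + (γ ^ (p - 1) * ((N : ℝ) - p - γ * (p - 1))) / r ^ p * (h r) ^ (p - 1) :=
  stmt4_general N p μ γ hp2 hμ hγ h1 h2 h hh
end
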